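/- Let f : [0,∞) → ℝ be a bounded continuous function whose derivative f' exists and is bounded on [0,∞). Then for any c > 0, ∫₀^∞ (f(t)² + f'(t)²) e^{-ct} dt ≥ f(0)²/(c+1). -/

import Mathlib

/-!
With `g t = f t ^ 2 * exp (-c t)`, which vanishes at infinity because `f` is bounded, the
fundamental theorem of calculus gives `f 0 ^ 2 = ∫ (c f² - 2 f f') e^{-ct}`. Pointwise,
`(c + 1)(f² + f'²) - (c f² - 2 f f') = (f + f')² + c f'² ≥ 0`, and integrating this bound gives
the inequality.
-/

open MeasureTheory Set Real Filter Topology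

theorem aestronglyMeasurable_of_forall_hasDerivAt {μ : Measure ℝ} {f f' : ℝ → ℝ} {s : Set ℝ}
    (hs : MeasurableSet s) (h : ∀ t ∈ s, HasDerivAt f (f' t) t) :
    AEStronglyMeasurable f' (μ.restrict s) :=
  (measurable_deriv f).aestronglyMeasurable.congr
    ((ae_restrict_iff' hs).2 (.of_forall fun t ht => (h t ht).deriv))

theorem sq_add_sq_le_of_abs_le {x y M M' : ℝ} (hx : |x| ≤ M) (hy : |y| ≤ M') :
    x ^ 2 + y ^ 2 ≤ M ^ 2 + M' ^ 2 :=
  add_le_add ((abs_le.1 hx).elim sq_le_sq') ((abs_le.1 hy).elim sq_le_sq')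

section ExpWeight

variable {a c : ℝ}

theorem integrableOn_Ioi_mul_exp_neg {g : ℝ → ℝ} {K : ℝ} (hc : 0 < c)
    (hg : AEStronglyMeasurable g (volume.restrict (Ioi a))) (hK : ∀ t ∈ Ioi a, |g t| ≤ K) :
    IntegrableOn (fun t => g t * exp (-c * t)) (Ioi a) :=
  (exp_neg_integrableOn_Ioi a hc).bdd_mul hg ((ae_restrict_iff' measurableSet_Ioi).2 (.of_forall hK))

theorem tendsto_mul_exp_neg_atTop_zero {g : ℝ → ℝ} {K : ℝ} (hc : 0 < c)
    (hK : ∀ t ∈ Ioi a, |g t| ≤ K) :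
    Tendsto (fun t => g t * exp (-c * t)) atTop (𝓝 0) := by
  have hexp : Tendsto (fun t => exp (-c * t)) atTop (𝓝 0) :=
    tendsto_exp_comp_nhds_zero.2 (tendsto_id.const_mul_atTop_of_neg (neg_neg_of_pos hc))
  have hbdd : IsBoundedUnder (· ≤ ·) atTop (fun t => ‖g t‖) :=
    isBoundedUnder_of_eventually_le (a := K) (eventually_gt_atTop a |>.mono hK)
  simpa only [mul_comm] using hexp.zero_mul_isBoundedUnder_le hbdd

theorem integrableOn_Ioi_deriv_sub_mul_exp_neg {F F' : ℝ → ℝ} {M M' : ℝ} (hc : 0 < c)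
    (hF : ∀ t ∈ Ioi a, HasDerivAt F (F' t) t) (hM : ∀ t ∈ Ioi a, |F t| ≤ M)
    (hM' : ∀ t ∈ Ioi a, |F' t| ≤ M') :
    IntegrableOn (fun t => (F' t - c * F t) * exp (-c * t)) (Ioi a) := by
  have hmeas : AEStronglyMeasurable (fun t => F' t - c * F t) (volume.restrict (Ioi a)) :=
    (aestronglyMeasurable_of_forall_hasDerivAt measurableSet_Ioi hF).sub
      ((HasDerivAt.continuousOn hF).aestronglyMeasurable measurableSet_Ioi |>.const_mul c)
  refine integrableOn_Ioi_mul_exp_neg hc hmeas (K := M' + c * M) fun t ht => ?_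
  calc |F' t - c * F t| ≤ |F' t| + |c * F t| := abs_sub _ _
    _ = |F' t| + c * |F t| := by rw [abs_mul, abs_of_pos hc]
    _ ≤ M' + c * M := by gcongr <;> [exact hM' t ht; exact hM t ht]

/-- `(F' - c F) e^{-ct}` is the derivative of `F e^{-ct}`, which tends to `0` since `F` is bounded. -/
theorem integral_Ioi_deriv_sub_mul_exp_neg {F F' : ℝ → ℝ} {M M' : ℝ} (hc : 0 < c)
    (hF : ∀ t ∈ Ici a, HasDerivAt F (F' t) t) (hM : ∀ t ∈ Ioi a, |F t| ≤ M)
    (hM' : ∀ t ∈ Ioi a, |F' t| ≤ M') :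
    ∫ t in Ioi a, (F' t - c * F t) * exp (-c * t) = -(F a * exp (-c * a)) := by
  have hF_Ioi : ∀ t ∈ Ioi a, HasDerivAt F (F' t) t := fun t ht => hF t (mem_Ici_of_Ioi ht)
  have hderiv : ∀ t ∈ Ioi a, HasDerivAt (fun t => F t * exp (-c * t))
      ((F' t - c * F t) * exp (-c * t)) t := fun t ht => by
    refine ((hF_Ioi t ht).mul ((hasDerivAt_id t).const_mul (-c)).exp).congr_deriv ?_
    simp only [id, mul_one]
    ring
  have hcont : ContinuousWithinAt (fun t => F t * exp (-c * t)) (Ici a) a :=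
    ((hF a self_mem_Ici).continuousAt.mul (by fun_prop)).continuousWithinAt
  rw [integral_Ioi_of_hasDerivAt_of_tendsto hcont hderiv
    (integrableOn_Ioi_deriv_sub_mul_exp_neg hc hF_Ioi hM hM')
    (tendsto_mul_exp_neg_atTop_zero hc hM), zero_sub]

theorem integrableOn_Ioi_sq_add_sq_mul_exp_neg {f f' : ℝ → ℝ} {M M' : ℝ} (hc : 0 < c)
    (hf : ∀ t ∈ Ioi a, HasDerivAt f (f' t) t) (hM : ∀ t ∈ Ioi a, |f t| ≤ M)
    (hM' : ∀ t ∈ Ioi a, |f' t| ≤ M') :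
    IntegrableOn (fun t => (f t ^ 2 + f' t ^ 2) * exp (-c * t)) (Ioi a) := by
  have hmeas : AEStronglyMeasurable (fun t => f t ^ 2 + f' t ^ 2) (volume.restrict (Ioi a)) :=
    (((HasDerivAt.continuousOn hf).aestronglyMeasurable measurableSet_Ioi).pow 2).add
      ((aestronglyMeasurable_of_forall_hasDerivAt measurableSet_Ioi hf).pow 2)
  refine integrableOn_Ioi_mul_exp_neg hc hmeas (K := M ^ 2 + M' ^ 2) fun t ht => ?_
  rw [abs_of_nonneg (by positivity)]
  exact sq_add_sq_le_of_abs_le (hM t ht) (hM' t ht)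

theorem sq_mul_exp_neg_le_integral_Ioi {f f' : ℝ → ℝ} {M M' : ℝ} (hc : 0 < c)
    (hf : ∀ t ∈ Ici a, HasDerivAt f (f' t) t) (hM : ∀ t ∈ Ioi a, |f t| ≤ M)
    (hM' : ∀ t ∈ Ioi a, |f' t| ≤ M') :
    f a ^ 2 * exp (-c * a) ≤ (c + 1) * ∫ t in Ioi a, (f t ^ 2 + f' t ^ 2) * exp (-c * t) := by
  have hsq : ∀ t ∈ Ici a, HasDerivAt (fun t => f t ^ 2) (2 * f t * f' t) t := fun t ht =>
    ((hf t ht).pow 2).congr_deriv (by push_cast; ring)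
  have hsq_bdd : ∀ t ∈ Ioi a, |f t ^ 2| ≤ M ^ 2 + M' ^ 2 := fun t ht =>
    (abs_sq _).trans_le <|
      (le_add_of_nonneg_right (sq_nonneg _)).trans (sq_add_sq_le_of_abs_le (hM t ht) (hM' t ht))
  have hsq'_bdd : ∀ t ∈ Ioi a, |2 * f t * f' t| ≤ M ^ 2 + M' ^ 2 := fun t ht =>
    (abs_le.2 ⟨by nlinarith [sq_nonneg (f t + f' t)], two_mul_le_add_sq _ _⟩).trans
      (sq_add_sq_le_of_abs_le (hM t ht) (hM' t ht))
  have hf_Ioi : ∀ t ∈ Ioi a, HasDerivAt f (f' t) t := fun t ht => hf t (mem_Ici_of_Ioi ht)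
  calc f a ^ 2 * exp (-c * a)
      = ∫ t in Ioi a, -((2 * f t * f' t - c * f t ^ 2) * exp (-c * t)) := by
        rw [integral_neg, integral_Ioi_deriv_sub_mul_exp_neg hc hsq hsq_bdd hsq'_bdd, neg_neg]
    _ ≤ ∫ t in Ioi a, (c + 1) * ((f t ^ 2 + f' t ^ 2) * exp (-c * t)) := by
        refine setIntegral_mono_on
          (integrableOn_Ioi_deriv_sub_mul_exp_neg hc (fun t ht => hsq t (mem_Ici_of_Ioi ht))
            hsq_bdd hsq'_bdd).neg
          ((integrableOn_Ioi_sq_add_sq_mul_exp_neg hc hf_Ioi hM hM').const_mul _)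
          measurableSet_Ioi fun t _ => ?_
        rw [← neg_mul, neg_sub, ← mul_assoc]
        refine mul_le_mul_of_nonneg_right ?_ (exp_pos _).le
        nlinarith [sq_nonneg (f t + f' t), mul_nonneg hc.le (sq_nonneg (f' t))]
    _ = (c + 1) * ∫ t in Ioi a, (f t ^ 2 + f' t ^ 2) * exp (-c * t) := integral_const_mul _ _

end ExpWeight

theorem cauchy_gap_derivative_lemma_general
    (f f' : ℝ → ℝ) (c : ℝ) (hc : 0 < c)
    (hf_bdd : ∃ M, ∀ t ∈ Ici (0:ℝ), |f t| ≤ M)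
    (hderiv : ∀ t ∈ Ici (0:ℝ), HasDerivAt f (f' t) t)
    (hf'_bdd : ∃ M, ∀ t ∈ Ici (0:ℝ), |f' t| ≤ M) :
    ∫ t in Ioi (0:ℝ), (f t ^ 2 + f' t ^ 2) * Real.exp (-c * t)
      ≥ f 0 ^ 2 / (c + 1) := by
  obtain ⟨M, hM⟩ := hf_bdd
  obtain ⟨M', hM'⟩ := hf'_bdd
  have hineq := sq_mul_exp_neg_le_integral_Ioi hc hderiv
    (fun t ht => hM t (mem_Ici_of_Ioi ht)) (fun t ht => hM' t (mem_Ici_of_Ioi ht))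
  rw [mul_zero, exp_zero, mul_one] at hineq
  rw [ge_iff_le, div_le_iff₀' (by positivity)]
  exact hineq

theorem cauchy_gap_derivative_lemma
    (f f' : ℝ → ℝ) (c : ℝ) (hc : 0 < c)
    (hf_cont : ContinuousOn f (Ici 0))
    (hf_bdd : ∃ M, ∀ t ∈ Ici (0:ℝ), |f t| ≤ M)
    (hderiv : ∀ t ∈ Ici (0:ℝ), HasDerivAt f (f' t) t)
    (hf'_bdd : ∃ M, ∀ t ∈ Ici (0:ℝ), |f' t| ≤ M) :
    ∫ t in Ioi (0:ℝ), (f t ^ 2 + f' t ^ 2) * Real.exp (-c * t)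
      ≥ f 0 ^ 2 / (c + 1) :=
  cauchy_gap_derivative_lemma_general f f' c hc hf_bdd hderiv hf'_bdd
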